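/- Let d ≥ 1 and let u ∈ ℂ^d with Σ_{i=1}^d u_i² = 0. In the polynomial ring ℂ[X_1,…,X_d, Y_1,…,Y_d, z, z̄, w, w̄] (where z̄ and w̄ are independent formal variables), define the derivation 𝒫 = Σ_{i=1}^d u_i ( z·∂/∂X_i − 2X_i·∂/∂z̄ + w·∂/∂Y_i − 2Y_i·∂/∂w̄ ). For integers n ≥ s ≥ 0 set ψ = z̄^{n−s} · ( z̄·(Σ_i u_i Y_i) − w̄·(Σ_i u_i X_i) )^s. Then 𝒫^{n+1−s} ψ = 0. -/
import Mathlib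


open MvPolynomial

/-- Formal variables `X_1,…,X_d, Y_1,…,Y_d, z, z̄, w, w̄` of the polynomial ring used
in the compact 'conformal-style' realization of so(d+2). -/
inductive DSVar (d : ℕ) where
  | X : Fin d → DSVar d
  | Y : Fin d → DSVar d
  | z : DSVar d
  | zbar : DSVar d
  | w : DSVar d
  | wbar : DSVar d
  deriving DecidableEq

/-- The raising operator `𝒫 = Σ_i u_i (z ∂_{X_i} − 2X_i ∂_{z̄} + w ∂_{Y_i} − 2Y_i ∂_{w̄})`
acting on `ℂ[X, Y, z, z̄, w, w̄]`. -/
noncomputable def Pop (d : ℕ) (u : Fin d → ℂ)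
    (p : MvPolynomial (DSVar d) ℂ) : MvPolynomial (DSVar d) ℂ :=
  ∑ i : Fin d, C (u i) *
    (X DSVar.z * pderiv (DSVar.X i) p
      - 2 * X (DSVar.X i) * pderiv DSVar.zbar p
      + X DSVar.w * pderiv (DSVar.Y i) p
      - 2 * X (DSVar.Y i) * pderiv DSVar.wbar p)

section aux
variable {d : ℕ} {u : Fin d → ℂ}

/-- `A = u·X` -/
noncomputable def PA (d : ℕ) (u : Fin d → ℂ) : MvPolynomial (DSVar d) ℂ :=
  ∑ i : Fin d, C (u i) * X (DSVar.X i)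

/-- `B = u·Y` -/
noncomputable def PB (d : ℕ) (u : Fin d → ℂ) : MvPolynomial (DSVar d) ℂ :=
  ∑ i : Fin d, C (u i) * X (DSVar.Y i)

lemma Pop_add (p q : MvPolynomial (DSVar d) ℂ) :
    Pop d u (p + q) = Pop d u p + Pop d u q := by
  simp only [Pop, map_add]
  rw [← Finset.sum_add_distrib]
  exact Finset.sum_congr rfl (fun i _ => by ring)

lemma Pop_mul (p q : MvPolynomial (DSVar d) ℂ) :
    Pop d u (p * q) = Pop d u p * q + p * Pop d u q := by
  simp only [Pop, pderiv_mul]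
  rw [Finset.sum_mul, Finset.mul_sum, ← Finset.sum_add_distrib]
  exact Finset.sum_congr rfl (fun i _ => by ring)

lemma Pop_C (c : ℂ) : Pop d u (C c) = 0 := by
  simp [Pop, pderiv_C]

lemma Pop_Cmul (c : ℂ) (p : MvPolynomial (DSVar d) ℂ) :
    Pop d u (C c * p) = C c * Pop d u p := by
  rw [Pop_mul, Pop_C]; ring

lemma Pop_sub (p q : MvPolynomial (DSVar d) ℂ) :
    Pop d u (p - q) = Pop d u p - Pop d u q := by
  have h : p - q = p + C (-1 : ℂ) * q := by
    simp only [map_neg, map_one]; ring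
  rw [h, Pop_add, Pop_Cmul]
  simp only [map_neg, map_one]; ring

lemma Pop_pow (p : MvPolynomial (DSVar d) ℂ) (k : ℕ) :
    Pop d u (p ^ (k + 1)) = C ((k : ℂ) + 1) * p ^ k * Pop d u p := by
  induction k with
  | zero => simp
  | succ k ih =>
    rw [pow_succ, Pop_mul, ih, pow_succ]
    push_cast
    simp only [map_add, map_one]
    ring

lemma Pop_zbar : Pop d u (X DSVar.zbar) = C (-2 : ℂ) * PA d u := by
  simp only [Pop, pderiv_X, PA]
  rw [Finset.mul_sum]
  refine Finset.sum_congr rfl (fun i _ => ?_)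
  simp [Pi.single_apply]
  simp only [map_neg, map_ofNat]
  ring

lemma Pop_wbar : Pop d u (X DSVar.wbar) = C (-2 : ℂ) * PB d u := by
  simp only [Pop, pderiv_X, PB]
  rw [Finset.mul_sum]
  refine Finset.sum_congr rfl (fun i _ => ?_)
  simp [Pi.single_apply]
  simp only [map_neg, map_ofNat]
  ring

lemma Pop_A (hu : ∑ i, u i * u i = 0) : Pop d u (PA d u) = 0 := by
  have hX : ∀ i : Fin d, pderiv (DSVar.X i) (PA d u) = C (u i) := by
    intro i; simp [PA, pderiv_C_mul, Pi.single_apply]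
  have hz : pderiv DSVar.zbar (PA d u) = 0 := by
    simp [PA, pderiv_C_mul, Pi.single_apply]
  have hY : ∀ i : Fin d, pderiv (DSVar.Y i) (PA d u) = 0 := by
    intro i; simp [PA, pderiv_C_mul, Pi.single_apply]
  have hw : pderiv DSVar.wbar (PA d u) = 0 := by
    simp [PA, pderiv_C_mul, Pi.single_apply]
  simp only [Pop, hX, hz, hY, hw, mul_zero, add_zero, sub_zero]
  have : ∀ i ∈ (Finset.univ : Finset (Fin d)),
      (C (u i) * (X DSVar.z * C (u i)) : MvPolynomial (DSVar d) ℂ)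
        = C (u i * u i) * X DSVar.z := by
    intro i _; rw [map_mul]; ring
  rw [Finset.sum_congr rfl this, ← Finset.sum_mul, ← map_sum, hu, map_zero, zero_mul]

lemma Pop_B (hu : ∑ i, u i * u i = 0) : Pop d u (PB d u) = 0 := by
  have hX : ∀ i : Fin d, pderiv (DSVar.X i) (PB d u) = 0 := by
    intro i; simp [PB, pderiv_C_mul, Pi.single_apply]
  have hz : pderiv DSVar.zbar (PB d u) = 0 := by
    simp [PB, pderiv_C_mul, Pi.single_apply]
  have hY : ∀ i : Fin d, pderiv (DSVar.Y i) (PB d u) = C (u i) := by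
    intro i; simp [PB, pderiv_C_mul, Pi.single_apply]
  have hw : pderiv DSVar.wbar (PB d u) = 0 := by
    simp [PB, pderiv_C_mul, Pi.single_apply]
  simp only [Pop, hX, hz, hY, hw, mul_zero, add_zero, sub_zero, zero_add, zero_sub]
  have : ∀ i ∈ (Finset.univ : Finset (Fin d)),
      (C (u i) * (X DSVar.w * C (u i)) : MvPolynomial (DSVar d) ℂ)
        = C (u i * u i) * X DSVar.w := by
    intro i _; rw [map_mul]; ring
  rw [Finset.sum_congr rfl this, ← Finset.sum_mul, ← map_sum, hu, map_zero, zero_mul]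

lemma Pop_M (hu : ∑ i, u i * u i = 0) :
    Pop d u (X DSVar.zbar * PB d u - X DSVar.wbar * PA d u) = 0 := by
  rw [Pop_sub, Pop_mul, Pop_mul, Pop_zbar, Pop_wbar, Pop_A hu, Pop_B hu]
  ring

lemma Pop_pow_zero {q : MvPolynomial (DSVar d) ℂ} (hq : Pop d u q = 0) (s : ℕ) :
    Pop d u (q ^ s) = 0 := by
  cases s with
  | zero => simpa using Pop_C (d := d) (u := u) 1
  | succ s => rw [Pop_pow, hq]; ring

lemma key (hu : ∑ i, u i * u i = 0) :
    ∀ (m : ℕ) (q : MvPolynomial (DSVar d) ℂ), Pop d u q = 0 →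
      (Pop d u)^[m + 1] ((X DSVar.zbar) ^ m * q) = 0 := by
  intro m
  induction m with
  | zero => intro q hq; simpa using hq
  | succ m ih =>
    intro q hq
    rw [Function.iterate_succ_apply]
    have h1 : Pop d u ((X DSVar.zbar) ^ (m + 1) * q)
        = (X DSVar.zbar) ^ m * (C ((m : ℂ) + 1) * (C (-2 : ℂ) * PA d u) * q) := by
      rw [Pop_mul, Pop_pow, hq, Pop_zbar]; ring
    rw [h1]
    apply ih
    rw [Pop_mul, Pop_Cmul, Pop_Cmul, Pop_A hu, hq]
    ring

end aux

/-- The level-(n+1−s) constraint on the descendants of the lowest-weight vector of the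
two-row representation `Y_{n,s}` of so(d+2): for a null polarization `u`,
`𝒫^{n+1−s} [ z̄^{n−s} (z̄ (u·Y) − w̄ (u·X))^s ] = 0`. -/
theorem stmt17 (d : ℕ) (hd : 1 ≤ d) (u : Fin d → ℂ) (hu : ∑ i, u i * u i = 0)
    (n s : ℕ) (hns : s ≤ n) :
    (Pop d u)^[n + 1 - s]
      ((X DSVar.zbar : MvPolynomial (DSVar d) ℂ) ^ (n - s) *
        (X DSVar.zbar * (∑ i : Fin d, C (u i) * X (DSVar.Y i))
          - X DSVar.wbar * (∑ i : Fin d, C (u i) * X (DSVar.X i))) ^ s) = 0 := by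
  have hiter : n + 1 - s = (n - s) + 1 := by omega
  rw [hiter]
  exact key hu (n - s) _ (Pop_pow_zero (Pop_M hu) s)
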